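/- Let w : ℝ² → ℝ be a polynomial of degree at most 3 in each of the two variables separately (a bicubic, i.e. Q₃, polynomial). Then for every (x₁,x₂) ∈ ℝ², w(x₁,x₂) = Σ_{α,β ∈ {0,1}²} (∂₁^{α₁} ∂₂^{α₂} w)(β₁,β₂) · B̂_{α,β}(x₁,x₂), where B̂_{α,β}(x₁,x₂) = Ĥ_{α₁β₁}(x₁) Ĥ_{α₂β₂}(x₂) with Ĥ₀₀(t) = (2t+1)(t−1)², Ĥ₁₀(t) = t(t−1)², Ĥ₀₁(t) = t²(3−2t), Ĥ₁₁(t) = t²(t−1). -/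

import Mathlib

/-- The cubic Hermite spline `Ĥ_{αβ}`, `α, β ∈ {0,1}`. -/
noncomputable def hermite (α β : Fin 2) : ℝ → ℝ :=
  if α = 0 then
    (if β = 0 then fun t => (2 * t + 1) * (t - 1) ^ 2 else fun t => t ^ 2 * (3 - 2 * t))
  else
    (if β = 0 then fun t => t * (t - 1) ^ 2 else fun t => t ^ 2 * (t - 1))

/-- The Bogner-Fox-Schmit reference shape function
`B̂_{α,β}(x₁,x₂) = Ĥ_{α₁β₁}(x₁) Ĥ_{α₂β₂}(x₂)`. -/
noncomputable def bfs (α β : Fin 2 × Fin 2) : ℝ → ℝ → ℝ :=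
  fun x₁ x₂ => hermite α.1 β.1 x₁ * hermite α.2 β.2 x₂

/-!
Both sides are linear in `w`, so it suffices to treat monomials `c X₀ⁱ X₁ʲ` with `i, j ≤ 3`.
Such a monomial is a product `p(X₀) q(X₁)` of univariate cubics, the BFS shape functions are
products of Hermite splines, and `∂₀ᵃ∂₁ᵇ (p(X₀) q(X₁)) = p⁽ᵃ⁾(X₀) q⁽ᵇ⁾(X₁)`; hence the BFS
interpolant of `p(X₀) q(X₁)` is the product of the one-dimensional Hermite interpolants of `p` and
`q`, which reproduce cubics.
-/

theorem hermite_reproduces_cubics (p : Polynomial ℝ) (hp : p.natDegree ≤ 3) (t : ℝ) :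
    ∑ a : Fin 2, ∑ b : Fin 2, (Polynomial.derivative^[a] p).eval (b : ℝ) * hermite a b t =
      p.eval t := by
  rw [p.as_sum_range_C_mul_X_pow' (Nat.lt_succ_of_le hp)]
  simp only [Fin.sum_univ_two, Finset.sum_range_succ, Finset.sum_range_zero, hermite,
    Function.iterate_zero, Function.iterate_one, id, Polynomial.derivative_add,
    Polynomial.derivative_C_mul_X_pow, Polynomial.derivative_zero, Polynomial.eval_add,
    Polynomial.eval_mul, Polynomial.eval_C, Polynomial.eval_pow, Polynomial.eval_X,
    Polynomial.eval_zero, Fin.isValue, Fin.val_zero, Fin.val_one, Nat.cast_zero, Nat.cast_one,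
    if_true, one_ne_zero, if_false]
  ring

open MvPolynomial

section
variable {R σ : Type*} [CommRing R]

theorem eval_polynomial_aeval_X (f : σ → R) (i : σ) (p : Polynomial R) :
    eval f (Polynomial.aeval (X i) p) = p.eval (f i) := by
  change aeval f (Polynomial.aeval (X i) p) = _
  rw [← Polynomial.aeval_algHom_apply, aeval_X, Polynomial.coe_aeval_eq_eval]

noncomputable def tensorPoly (p q : Polynomial R) : MvPolynomial (Fin 2) R :=
  Polynomial.aeval (X 0) p * Polynomial.aeval (X 1) q

theorem pderiv_zero_tensorPoly (p q : Polynomial R) :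
    pderiv 0 (tensorPoly p q) = tensorPoly (Polynomial.derivative p) q := by
  simp [tensorPoly, pderiv_X, mul_comm]

theorem pderiv_one_tensorPoly (p q : Polynomial R) :
    pderiv 1 (tensorPoly p q) = tensorPoly p (Polynomial.derivative q) := by
  simp [tensorPoly, pderiv_X]

theorem iterate_pderiv_tensorPoly (p q : Polynomial R) (m n : ℕ) :
    (fun f => pderiv (0 : Fin 2) f)^[m] ((fun f => pderiv (1 : Fin 2) f)^[n] (tensorPoly p q)) =
      tensorPoly (Polynomial.derivative^[m] p) (Polynomial.derivative^[n] q) := by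
  have h₁ := Function.Semiconj.iterate_right (f := tensorPoly p)
    (fun q => (pderiv_one_tensorPoly p q).symm) n
  have h₀ := Function.Semiconj.iterate_right (f := (tensorPoly · (Polynomial.derivative^[n] q)))
    (fun p => (pderiv_zero_tensorPoly p _).symm) m
  rw [← h₁ q, ← h₀ p]

theorem eval_tensorPoly (p q : Polynomial R) (u v : R) :
    eval (fun i => if i = 0 then u else v) (tensorPoly p q) = p.eval u * q.eval v := by
  simp [tensorPoly, eval_polynomial_aeval_X]

theorem monomial_eq_tensorPoly (d : Fin 2 →₀ ℕ) (c : R) :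
    monomial d c = tensorPoly (Polynomial.monomial (d 0) c) (Polynomial.X ^ d 1) := by
  rw [tensorPoly, monomial_eq, Finsupp.prod_fintype _ _ (fun i => pow_zero _), Fin.prod_univ_two]
  simp [← Polynomial.C_mul_X_pow_eq_monomial, mul_assoc]
end

/-- The BFS interpolant `Π_BFS w`, evaluated at `(x₁, x₂)`. -/
noncomputable def bfsInterpolation (x₁ x₂ : ℝ) : MvPolynomial (Fin 2) ℝ →ₗ[ℝ] ℝ :=
  ∑ α : Fin 2 × Fin 2, ∑ β : Fin 2 × Fin 2, bfs α β x₁ x₂ •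
    ((aeval fun i => if i = 0 then (β.1 : ℝ) else (β.2 : ℝ)).toLinearMap ∘ₗ
      ((pderiv 0).toLinearMap ^ (α.1 : ℕ)) ∘ₗ ((pderiv 1).toLinearMap ^ (α.2 : ℕ)))

theorem bfsInterpolation_apply (x₁ x₂ : ℝ) (w : MvPolynomial (Fin 2) ℝ) :
    bfsInterpolation x₁ x₂ w =
      ∑ α : Fin 2 × Fin 2, ∑ β : Fin 2 × Fin 2,
        MvPolynomial.eval (fun i => if i = 0 then (β.1 : ℝ) else (β.2 : ℝ))
          ((fun p => MvPolynomial.pderiv (0 : Fin 2) p)^[(α.1 : ℕ)]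
            ((fun p => MvPolynomial.pderiv (1 : Fin 2) p)^[(α.2 : ℕ)] w)) *
          bfs α β x₁ x₂ := by
  simp only [bfsInterpolation, LinearMap.sum_apply, LinearMap.smul_apply,
    LinearMap.comp_apply, Module.End.pow_apply, AlgHom.toLinearMap_apply, smul_eq_mul,
    mul_comm (bfs _ _ x₁ x₂)]
  rfl

theorem bfsInterpolation_tensorPoly (x₁ x₂ : ℝ) (p q : Polynomial ℝ) (hp : p.natDegree ≤ 3)
    (hq : q.natDegree ≤ 3) :
    bfsInterpolation x₁ x₂ (tensorPoly p q) = p.eval x₁ * q.eval x₂ := by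
  rw [bfsInterpolation_apply, ← hermite_reproduces_cubics p hp, ← hermite_reproduces_cubics q hq]
  simp only [iterate_pderiv_tensorPoly, eval_tensorPoly, bfs, Fintype.sum_prod_type,
    Fin.sum_univ_two]
  ring

theorem bfsInterpolation_monomial (x₁ x₂ : ℝ) (d : Fin 2 →₀ ℕ) (c : ℝ) (h₀ : d 0 ≤ 3)
    (h₁ : d 1 ≤ 3) :
    bfsInterpolation x₁ x₂ (monomial d c) =
      eval (fun i => if i = 0 then x₁ else x₂) (monomial d c) := by
  rw [monomial_eq_tensorPoly, eval_tensorPoly, bfsInterpolation_tensorPoly]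
  · exact (Polynomial.natDegree_monomial_le c).trans h₀
  · exact (Polynomial.natDegree_X_pow_le _).trans h₁

/-- BFS interpolation reproduces bicubic (`Q₃`) polynomials: if `w` is a real polynomial
in two variables of degree at most `3` in each variable separately, then for every
`(x₁,x₂)`, `w(x₁,x₂) = Σ_{α,β ∈ {0,1}²} (∂₁^{α₁}∂₂^{α₂} w)(β₁,β₂) · B̂_{α,β}(x₁,x₂)`. -/
theorem bfs_reproduces_bicubics (w : MvPolynomial (Fin 2) ℝ)
    (hw : ∀ i : Fin 2, w.degreeOf i ≤ 3) :
    ∀ x₁ x₂ : ℝ,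
      MvPolynomial.eval (fun i => if i = 0 then x₁ else x₂) w =
      ∑ α : Fin 2 × Fin 2, ∑ β : Fin 2 × Fin 2,
        MvPolynomial.eval (fun i => if i = 0 then (β.1 : ℝ) else (β.2 : ℝ))
          ((fun p => MvPolynomial.pderiv (0 : Fin 2) p)^[(α.1 : ℕ)]
            ((fun p => MvPolynomial.pderiv (1 : Fin 2) p)^[(α.2 : ℕ)] w)) *
          bfs α β x₁ x₂ := by
  intro x₁ x₂
  rw [← bfsInterpolation_apply, ← w.support_sum_monomial_coeff, map_sum, map_sum]
  refine Finset.sum_congr rfl fun d hd => (bfsInterpolation_monomial x₁ x₂ d _ ?_ ?_).symm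
  · exact (monomial_le_degreeOf 0 hd).trans (hw 0)
  · exact (monomial_le_degreeOf 1 hd).trans (hw 1)
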